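/- Fix an integer K ≥ 2. For any probability vector p ∈ Δ({1,...,K}) with all p_k > 0 and any q ∈ Δ({1,...,K−1}) with all q_k > 0, we have min_{k=1,...,K−1} (p_k p_{k+1}/(p_k + p_{k+1})) q_k² < 1/(2(K−1)³). -/

import Mathlib

/-!
Write `n = K - 1`. If every term were at least `c = 1 / (2 n³)`, then, since the harmonic term
`p_k p_{k+1} / (p_k + p_{k+1})` is at most `(p_k + p_{k+1}) / 4`, we would get
`p_k + p_{k+1} ≥ 4c / q_k²` for every `k`. Summing, the left side is `2 - p_1 - p_K < 2`, while
by Jensen `∑ 1 / q_k² ≥ n³` for a probability vector `q` of length `n`, so the right side is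
at least `4c n³ = 2`.
-/

open Finset

theorem mul_div_add_le_add_div_four {a b : ℝ} (hab : 0 ≤ a + b) :
    a * b / (a + b) ≤ (a + b) / 4 := by
  rcases hab.eq_or_lt with h | h
  · simp [← h]
  rw [div_le_div_iff₀ h (by norm_num)]
  nlinarith [sq_nonneg (a - b)]

theorem card_pow_three_le_sum_inv_sq {ι : Type*} (s : Finset ι) {q : ι → ℝ}
    (hq : ∀ i ∈ s, 0 < q i) (hqs : ∑ i ∈ s, q i = 1) :
    (#s : ℝ) ^ 3 ≤ ∑ i ∈ s, (q i ^ 2)⁻¹ := by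
  -- Jensen for `x ↦ x³` with weights `q i` at the points `(q i)⁻¹`.
  have jensen := (convexOn_pow 3).map_sum_le (fun i hi => (hq i hi).le) hqs
    (p := fun i => (q i)⁻¹) (fun i hi => (inv_pos.2 (hq i hi)).le)
  simp only [smul_eq_mul] at jensen
  calc (#s : ℝ) ^ 3 = (∑ i ∈ s, q i * (q i)⁻¹) ^ 3 := by
        rw [sum_congr rfl fun i hi => mul_inv_cancel₀ (hq i hi).ne', sum_const, nsmul_one]
    _ ≤ ∑ i ∈ s, q i * (q i)⁻¹ ^ 3 := jensen
    _ = ∑ i ∈ s, (q i ^ 2)⁻¹ := sum_congr rfl fun i hi => by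
        have := (hq i hi).ne'
        field_simp

theorem Fin.sum_castSucc_add_succ {M : Type*} [AddCommMonoid M] {N : ℕ} (p : Fin (N + 1) → M) :
    ∑ k : Fin N, (p k.castSucc + p k.succ) + (p 0 + p (Fin.last N)) = ∑ k, p k + ∑ k, p k := by
  rw [sum_add_distrib]
  nth_rw 1 [Fin.sum_univ_castSucc p]
  rw [Fin.sum_univ_succ p]
  abel

theorem exists_harmonic_mean_mul_sq_lt (N : ℕ) (p : Fin (N + 1) → ℝ) (hp : ∀ k, 0 < p k)
    (hps : ∑ k, p k = 1) (q : Fin N → ℝ) (hq : ∀ k, 0 < q k) (hqs : ∑ k, q k = 1) :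
    ∃ k : Fin N,
      p k.castSucc * p k.succ / (p k.castSucc + p k.succ) * q k ^ 2 < 1 / (2 * (N : ℝ) ^ 3) := by
  by_contra! h
  have hN : (0 : ℝ) < N := by
    rcases N.eq_zero_or_pos with rfl | hN
    · simp at hqs
    · exact_mod_cast hN
  have hpair (k : Fin N) : 2 / N ^ 3 * (q k ^ 2)⁻¹ ≤ p k.castSucc + p k.succ := by
    have hs := add_pos (hp k.castSucc) (hp k.succ)
    have := (h k).trans
      (mul_le_mul_of_nonneg_right (mul_div_add_le_add_div_four hs.le) (sq_nonneg _))
    rw [← div_eq_mul_inv, div_le_iff₀ (pow_pos (hq k) 2)]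
    calc 2 / (N : ℝ) ^ 3 = 4 * (1 / (2 * N ^ 3)) := by ring
      _ ≤ 4 * ((p k.castSucc + p k.succ) / 4 * q k ^ 2) := by gcongr
      _ = _ := by ring
  have hcube : (N : ℝ) ^ 3 ≤ ∑ k, (q k ^ 2)⁻¹ := by
    simpa using card_pow_three_le_sum_inv_sq univ (fun k _ => hq k) hqs
  have hends := Fin.sum_castSucc_add_succ p
  rw [hps] at hends
  have := hp 0
  have := hp (Fin.last N)
  refine lt_irrefl (2 : ℝ) ?_
  calc (2 : ℝ) = 2 / N ^ 3 * N ^ 3 := by field_simp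
    _ ≤ 2 / N ^ 3 * ∑ k, (q k ^ 2)⁻¹ := by gcongr
    _ = ∑ k, 2 / N ^ 3 * (q k ^ 2)⁻¹ := mul_sum ..
    _ ≤ ∑ k : Fin N, (p k.castSucc + p k.succ) := sum_le_sum fun k _ => hpair k
    _ < 2 := by linarith

theorem maxmin_step4 (K : ℕ)
    (p : Fin K → ℝ) (hp : ∀ k, 0 < p k) (hps : ∑ k, p k = 1)
    (q : Fin (K - 1) → ℝ) (hq : ∀ k, 0 < q k) (hqs : ∑ k, q k = 1) :
    ∃ k : Fin (K - 1),
      (p ⟨k.1, by have := k.isLt; omega⟩ * p ⟨k.1 + 1, by have := k.isLt; omega⟩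
          / (p ⟨k.1, by have := k.isLt; omega⟩ + p ⟨k.1 + 1, by have := k.isLt; omega⟩))
        * q k ^ 2
      < 1 / (2 * ((K : ℝ) - 1) ^ 3) := by
  obtain _ | N := K
  · simp at hqs
  obtain ⟨k, hk⟩ := exists_harmonic_mean_mul_sq_lt N p hp hps q hq hqs
  refine ⟨k, ?_⟩
  rwa [Nat.cast_succ, add_sub_cancel_right]
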